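/- arXiv:math/0703436 — 3 statements merged into one kernel-verified Lean document; each statement's English description precedes it below -/
import Mathlib

section
/- With δ = #𝔍_0 as above, δ > 0 if and only if n_j ≤ Σ_{k≠j} n_k for every 1 ≤ j ≤ r. -/
open Finset

/-! Lay the blocks `Fin (n i)` out consecutively on `Fin N`, `N = ∑ k, n k`, and rotate by `N / 2`.
Every block has length at most `N / 2`, so the rotation moves every point out of its block; the
block index of the rotated point is then an admissible `j`, with the right fibre sizes since the
rotation is a bijection. Conversely, the fibre over `i` of an admissible `j` lies outside block `i`. -/

theorem Nat.add_mod_notMem_Ico {N a l m x : ℕ} (hl : l ≤ m) (hm : m + m ≤ N) (hxN : x < N)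
    (hx : x ∈ Set.Ico a (a + l)) : (x + m) % N ∉ Set.Ico a (a + l) := by
  rintro ⟨hy₁, hy₂⟩
  obtain ⟨hx₁, hx₂⟩ := hx
  rcases Nat.lt_or_ge (x + m) N with h | h
  · rw [Nat.mod_eq_of_lt h] at hy₂
    omega
  · rw [Nat.mod_eq_sub_mod h, Nat.mod_eq_of_lt (by omega)] at hy₁
    omega

theorem exists_perm_sigma_fst_ne {r : ℕ} (n : Fin r → ℕ) (h : ∀ i, 2 * n i ≤ ∑ k, n k) :
    ∃ φ : Equiv.Perm ((i : Fin r) × Fin (n i)), ∀ p, (φ p).1 ≠ p.1 := by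
  set N := ∑ k, n k
  let e : ((i : Fin r) × Fin (n i)) ≃ Fin N := finSigmaFinEquiv
  rcases Nat.eq_zero_or_pos N with hN | hN
  · exact ⟨1, fun p => absurd (e p).isLt (by omega)⟩
  have : NeZero N := ⟨hN.ne'⟩
  let blockStart (i : Fin r) : ℕ := ∑ k : Fin i, n (Fin.castLE i.2.le k)
  have he (p : (i : Fin r) × Fin (n i)) : (e p : ℕ) = blockStart p.1 + p.2 :=
    finSigmaFinEquiv_apply p
  let half : Fin N := ⟨N / 2, Nat.div_lt_self hN one_lt_two⟩
  refine ⟨e.trans ((Equiv.addRight half).trans e.symm), fun p hp => ?_⟩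
  set q := e.symm (e p + half)
  have hq : (e q : ℕ) = (e p + N / 2) % N := by simp [q, half, Fin.val_add]
  have hblock : n p.1 ≤ N / 2 := by have := h p.1; omega
  change q.1 = p.1 at hp
  have hq₂ : (q.2 : ℕ) < n p.1 := hp ▸ q.2.isLt
  refine Nat.add_mod_notMem_Ico (a := blockStart p.1) hblock (by omega) (e p).isLt
    ⟨by simp [he p], by simp [he p]⟩ ?_
  rw [← hq, he q, congrArg blockStart hp]
  exact ⟨by omega, by omega⟩

section SigmaFst

variable {ι : Type*} [Fintype ι] [DecidableEq ι] {κ : ι → Type*} [∀ i, Fintype (κ i)]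

theorem card_filter_sigma_fst_eq (i : ι) :
    #{p : (i : ι) × κ i | p.1 = i} = Fintype.card (κ i) := by
  have : ({p : (i : ι) × κ i | p.1 = i} : Finset _) = ({i} : Finset ι).sigma fun _ => univ := by
    ext p; simp
  simp [this]

theorem card_filter_sigma_fst_ne (i : ι) :
    #{p : (i : ι) × κ i | p.1 ≠ i} = ∑ k ∈ univ.erase i, Fintype.card (κ k) := by
  have : ({p : (i : ι) × κ i | p.1 ≠ i} : Finset _) = (univ.erase i).sigma fun _ => univ := by
    ext p; simp
  simp [this]

end SigmaFst

theorem stmt5_general (r : ℕ) (n : Fin r → ℕ) :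
    0 < (Finset.univ.filter
        (fun j : ((i : Fin r) × Fin (n i)) → Fin r =>
          (∀ p, j p ≠ p.1) ∧
          ∀ i, (Finset.univ.filter fun p => j p = i).card = n i)).card
    ↔ ∀ i, n i ≤ ∑ k ∈ Finset.univ.erase i, n k := by
  constructor
  · intro hpos i
    obtain ⟨j, hj⟩ := card_pos.mp hpos
    obtain ⟨hj_ne, hj_fibre⟩ := (mem_filter.mp hj).2
    calc n i = #{p | j p = i} := (hj_fibre i).symm
      _ ≤ #{p : (i : Fin r) × Fin (n i) | p.1 ≠ i} :=
          card_le_card fun p hp => by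
            simp only [mem_filter_univ] at hp ⊢
            exact hp ▸ (hj_ne p).symm
      _ = ∑ k ∈ univ.erase i, n k := by simp [card_filter_sigma_fst_ne]
  · intro h
    obtain ⟨φ, hφ⟩ := exists_perm_sigma_fst_ne n fun i => by
      have := add_sum_erase univ n (mem_univ i)
      have := h i
      omega
    refine card_pos.mpr ⟨fun p => (φ p).1, mem_filter.mpr ⟨mem_univ _, hφ, fun i => ?_⟩⟩
    calc #{p | (φ p).1 = i} = #{p : (i : Fin r) × Fin (n i) | p.1 = i} :=
          card_equiv φ (by simp)
      _ = n i := by simp [card_filter_sigma_fst_eq]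

/-- `δ = #𝔍₀ > 0` iff `n j ≤ ∑_{k ≠ j} n k` for every `j`. -/
theorem stmt5 (r : ℕ) (n : Fin r → ℕ) (hn : ∀ i, 0 < n i) :
    0 < (Finset.univ.filter
        (fun j : ((i : Fin r) × Fin (n i)) → Fin r =>
          (∀ p, j p ≠ p.1) ∧
          ∀ i, (Finset.univ.filter fun p => j p = i).card = n i)).card
    ↔ ∀ i, n i ≤ ∑ k ∈ Finset.univ.erase i, n k :=
  stmt5_general r n
end

section
/- For each 1 ≤ i ≤ r, the Bézout number δ_i := Bez_{n_1,...,n_r}(d_0, 1; d_1, n_1; ...; d_i, n_i − 1; ...; d_r, n_r), where d_0 = (1,...,1) and d_j has 0 in coordinate j and 1 elsewhere, satisfies δ_i ≤ (n_i + 1)·δ, where δ = Bez_{n_1,...,n_r}(d_1, n_1; ...; d_r, n_r). -/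
open Finset

/-- The admissible index assignments (fiber of value `i` has size `n i`). -/
noncomputable def Jset (r : ℕ) (n : Fin r → ℕ) : Finset (((i : Fin r) × Fin (n i)) → Fin r) :=
  Finset.univ.filter fun j => ∀ i, (Finset.univ.filter fun p => j p = i).card = n i

/-- `δ`: Bézout number of the system with `n i` polynomials of multidegree `d_i`. -/
noncomputable def deltaBez (r : ℕ) (n : Fin r → ℕ) : ℕ :=
  ∑ j ∈ Jset r n, ∏ p : (i : Fin r) × Fin (n i), (if j p = p.1 then 0 else 1)

/-- `δ_{i₀}`: Bézout number where one polynomial of multidegree `d_{i₀}` is replaced by one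
of multidegree `d₀ = (1,…,1)`. -/
noncomputable def deltaBezI (r : ℕ) (n : Fin r → ℕ) (hn : ∀ i, 0 < n i) (i0 : Fin r) : ℕ :=
  ∑ j ∈ Jset r n, ∏ p : (i : Fin r) × Fin (n i),
    if p = ⟨i0, ⟨0, hn i0⟩⟩ then 1 else (if j p = p.1 then 0 else 1)

/-!
Read an assignment `j` as placing the polynomial at position `p` in the block `j p`; the Bézout
numbers count the assignments whose blocks have the prescribed sizes and which put no position
`p` into its own block `c p`. Those counted by `δ_{i₀}` but not by `δ` are exactly the ones with
`j p₀ = c p₀ = i₀`. By the balance condition such a `j` has a position `q` outside block `i₀` with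
`j q ≠ i₀`, and swapping `p₀` with `q` gives an assignment counted by `δ` that sends `q` to `i₀`.
Since `j` is recovered from the swapped assignment and `q`, and an assignment sends only `n_{i₀}`
positions to `i₀`, these exceptional assignments number at most `n_{i₀} · δ`.
-/

section Swap

variable {α ι : Type*} [DecidableEq α] {c : α → ι} {p₀ : α}

lemma comp_swap_apply_ne {j : α → ι} {q : α} (hj : ∀ p ≠ p₀, j p ≠ c p) (hj₀ : j p₀ = c p₀)
    (hq : c q ≠ c p₀) (hjq : j q ≠ c p₀) (p : α) : (j ∘ Equiv.swap p₀ q) p ≠ c p := by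
  rcases eq_or_ne p p₀ with rfl | hp₀
  · simpa using hjq
  rcases eq_or_ne p q with rfl | hpq
  · simpa [hj₀] using hq.symm
  · simpa [Equiv.swap_apply_of_ne_of_ne hp₀ hpq] using hj p hp₀

variable [Fintype α] [DecidableEq ι]

lemma exists_ne_and_apply_ne_of_card_le {j : α → ι}
    (hcard : #{p | j p = c p₀} ≤ #{p | c p ≠ c p₀}) (hj₀ : j p₀ = c p₀) :
    ∃ q, c q ≠ c p₀ ∧ j q ≠ c p₀ := by
  by_contra! h
  have hsub : insert p₀ ({p | c p ≠ c p₀} : Finset α) ⊆ ({p | j p = c p₀} : Finset α) := by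
    intro p hp
    rcases mem_insert.1 hp with rfl | hp
    · simpa using hj₀
    · simpa using h p (by simpa using hp)
  have := card_le_card hsub
  rw [card_insert_of_notMem (by simp)] at this
  omega

variable {J : Finset (α → ι)} {N : ℕ}

lemma card_filter_apply_eq_le_mul (hJ : ∀ j ∈ J, ∀ e : Equiv.Perm α, j ∘ e ∈ J)
    (hfib : ∀ j ∈ J, #{p | j p = c p₀} ≤ N) (hbal : N ≤ #{p | c p ≠ c p₀}) :
    #{j ∈ J | (∀ p ≠ p₀, j p ≠ c p) ∧ j p₀ = c p₀} ≤ N * #{j ∈ J | ∀ p, j p ≠ c p} := by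
  set good := {j ∈ J | ∀ p, j p ≠ c p}
  -- `j` is recovered as `j' ∘ swap p₀ q` from `j' := j ∘ swap p₀ q`, where `j' q = c p₀`.
  have hsub : {j ∈ J | (∀ p ≠ p₀, j p ≠ c p) ∧ j p₀ = c p₀} ⊆
      good.biUnion fun j' => ({q | j' q = c p₀} : Finset α).image (j' ∘ Equiv.swap p₀ ·) := by
    intro j hj
    obtain ⟨hjJ, hj, hj₀⟩ := by simpa only [mem_filter] using hj
    obtain ⟨q, hq, hjq⟩ :=
      exists_ne_and_apply_ne_of_card_le ((hfib j hjJ).trans hbal) hj₀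
    refine mem_biUnion.2 ⟨j ∘ Equiv.swap p₀ q, ?_, mem_image.2 ⟨q, ?_, ?_⟩⟩
    · exact mem_filter.2 ⟨hJ j hjJ _, comp_swap_apply_ne hj hj₀ hq hjq⟩
    · simpa using hj₀
    · ext p; simp
  calc _ ≤ _ := card_le_card hsub
    _ ≤ ∑ j' ∈ good, #(({q | j' q = c p₀} : Finset α).image (j' ∘ Equiv.swap p₀ ·)) :=
      card_biUnion_le
    _ ≤ ∑ _j' ∈ good, N :=
      sum_le_sum fun j' hj' => card_image_le.trans (hfib j' (mem_filter.1 hj').1)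
    _ = N * #good := by rw [sum_const, smul_eq_mul, mul_comm]

theorem card_filter_forall_ne_le_mul (hJ : ∀ j ∈ J, ∀ e : Equiv.Perm α, j ∘ e ∈ J)
    (hfib : ∀ j ∈ J, #{p | j p = c p₀} ≤ N) (hbal : N ≤ #{p | c p ≠ c p₀}) :
    #{j ∈ J | ∀ p ≠ p₀, j p ≠ c p} ≤ (N + 1) * #{j ∈ J | ∀ p, j p ≠ c p} := by
  have hsplit := card_filter_add_card_filter_not (s := {j ∈ J | ∀ p ≠ p₀, j p ≠ c p})
    (fun j => j p₀ = c p₀)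
  have hgood :
      {j ∈ {j ∈ J | ∀ p ≠ p₀, j p ≠ c p} | ¬j p₀ = c p₀} = {j ∈ J | ∀ p, j p ≠ c p} := by
    rw [filter_filter]
    refine filter_congr fun j _ => ⟨fun ⟨hj, hj₀⟩ p => ?_, fun hj => ⟨fun p _ => hj p, hj p₀⟩⟩
    rcases eq_or_ne p p₀ with rfl | hp
    exacts [hj₀, hj p hp]
  rw [filter_filter, hgood] at hsplit
  rw [← hsplit, add_mul, one_mul]
  exact Nat.add_le_add_right (card_filter_apply_eq_le_mul hJ hfib hbal) _

end Swap

section Bezout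

variable {r : ℕ} {n : Fin r → ℕ}

lemma mem_Jset {j : ((i : Fin r) × Fin (n i)) → Fin r} :
    j ∈ Jset r n ↔ ∀ i, #{p | j p = i} = n i := by
  simp [Jset]

lemma comp_perm_mem_Jset {j : ((i : Fin r) × Fin (n i)) → Fin r} (hj : j ∈ Jset r n)
    (e : Equiv.Perm ((i : Fin r) × Fin (n i))) : j ∘ e ∈ Jset r n := by
  rw [mem_Jset] at hj ⊢
  intro i
  rw [← hj i]
  exact card_equiv e fun p => by simp

lemma card_fst_ne (i0 : Fin r) :
    #{p : (i : Fin r) × Fin (n i) | p.1 ≠ i0} = ∑ k ∈ univ.erase i0, n k := by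
  have h : ({p | p.1 ≠ i0} : Finset ((i : Fin r) × Fin (n i))) =
      (univ.erase i0).sigma fun _ => univ := by
    ext ⟨a, b⟩
    simp
  simp [h, card_sigma]

lemma deltaBez_eq_card : deltaBez r n = #{j ∈ Jset r n | ∀ p, j p ≠ p.1} := by
  have h (j : ((i : Fin r) × Fin (n i)) → Fin r) (p : (i : Fin r) × Fin (n i)) :
      (if j p = p.1 then 0 else 1) = if j p ≠ p.1 then 1 else 0 :=
    (ite_not _ _ _).symm
  simp only [deltaBez, h, prod_boole, mem_univ, true_implies, sum_boole, Nat.cast_id]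

lemma deltaBezI_eq_card (hn : ∀ i, 0 < n i) (i0 : Fin r) :
    deltaBezI r n hn i0 = #{j ∈ Jset r n | ∀ p ≠ ⟨i0, ⟨0, hn i0⟩⟩, j p ≠ p.1} := by
  have h (j : ((i : Fin r) × Fin (n i)) → Fin r) (p : (i : Fin r) × Fin (n i)) :
      (if p = ⟨i0, ⟨0, hn i0⟩⟩ then 1 else if j p = p.1 then 0 else 1) =
        if p ≠ ⟨i0, ⟨0, hn i0⟩⟩ → j p ≠ p.1 then 1 else 0 := by
    by_cases hp : p = ⟨i0, ⟨0, hn i0⟩⟩ <;> by_cases hjp : j p = p.1 <;> simp [hp, hjp]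
  simp only [deltaBezI, h, prod_boole, mem_univ, true_implies, sum_boole, Nat.cast_id]

end Bezout

/-- `δ_i ≤ (n_i + 1) · δ`. -/
theorem stmt7 (r : ℕ) (n : Fin r → ℕ) (hn : ∀ i, 0 < n i)
    (hbal : ∀ i, n i ≤ ∑ k ∈ Finset.univ.erase i, n k) (i0 : Fin r) :
    deltaBezI r n hn i0 ≤ (n i0 + 1) * deltaBez r n := by
  rw [deltaBezI_eq_card, deltaBez_eq_card]
  exact card_filter_forall_ne_le_mul (fun _ => comp_perm_mem_Jset)
    (fun j hj => (mem_Jset.1 hj i0).le) ((hbal i0).trans (card_fst_ne i0).ge)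
end

section
/- Let p ∈ R[T] be square-free with deg p = δ ≥ 1, and q ∈ R[T]. The bilinear form S_q on R[T]/(p) defined by S_q(f,g) = Trace(M_{fqg}) has signature δ if and only if every complex root of p is real and q is strictly positive at every root of p. -/
/-!
For `F ∈ ℝ[X]` the Hermite form gives `S_q(F, F) = Tr(F q F) = ∑ q(z) F(z)²`, the sum over
the complex roots `z` of `p`: after base change to `ℂ`, the Chinese remainder theorem identifies
`ℂ[X]/(p)` with `ℂ^{roots}`, where the trace is the sum of the coordinates (`p` is squarefree,
so its roots are simple).

If all roots are real and `q > 0` at them, every term is `≥ 0`, and some term is `> 0` unless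
`F` vanishes at all roots, i.e. `p ∣ F`. Conversely, a real root `t` with `q(t) ≤ 0` is detected
by `F = p / (X - t)`, for which only the term at `t` survives. A pair `z, z̄` of non-real roots
is detected by `G = p / ((X - z)(X - z̄))`: for `F = G` or `F = G · (X - re z)` only the two
terms at `z, z̄` survive, they add up to `2 re (q(z) F(z)²)`, and the two choices give real parts
of opposite signs.

Finally, the signature equals `δ` iff all eigenvalues of the Gram matrix are positive, i.e. iff
`S_q` is positive definite.
-/

open Finset Polynomial

/-- The Gram matrix of the Hermite bilinear form `S_q(f,g) = Trace(M_{fqg})` on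
`ℝ[T]/(p)` in a basis `b`. -/
noncomputable def hermiteGram (p q : Polynomial ℝ)
    (b : Module.Basis (Fin p.natDegree) ℝ (Polynomial ℝ ⧸ Ideal.span {p})) :
    Matrix (Fin p.natDegree) (Fin p.natDegree) ℝ :=
  fun i j =>
    LinearMap.trace ℝ (Polynomial ℝ ⧸ Ideal.span {p})
      (LinearMap.mulLeft ℝ (b i * Ideal.Quotient.mk (Ideal.span {p}) q * b j))

namespace AdjoinRoot

variable {R : Type*} [CommRing R] {p : R[X]}

theorem trace_mk_eq_sum_coeff_modByMonic (hp : p.Monic) (g : R[X]) :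
    Algebra.trace R (AdjoinRoot p) (mk p g) =
      ∑ i ∈ range p.natDegree, ((g * X ^ i) %ₘ p).coeff i := by
  rw [Algebra.trace_eq_matrix_trace (powerBasis' hp).basis, Matrix.trace,
    ← Fin.sum_univ_eq_sum_range fun i => ((g * X ^ i) %ₘ p).coeff i]
  refine sum_congr rfl fun i _ => ?_
  rw [Matrix.diag_apply, Algebra.leftMulMatrix_eq_repr_mul, (powerBasis' hp).basis_eq_pow,
    powerBasis'_gen, ← mk_X, ← map_pow, ← map_mul]
  exact (powerBasisAux'_repr_apply_to_fun hp _ i).trans (by rw [modByMonicHom_mk])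

theorem map_trace_mk {S : Type*} [CommRing S] [Nontrivial S] (f : R →+* S) (hp : p.Monic)
    (g : R[X]) :
    f (Algebra.trace R (AdjoinRoot p) (mk p g)) =
      Algebra.trace S (AdjoinRoot (p.map f)) (mk _ (g.map f)) := by
  rw [trace_mk_eq_sum_coeff_modByMonic hp, trace_mk_eq_sum_coeff_modByMonic (hp.map f),
    hp.natDegree_map, map_sum]
  refine sum_congr rfl fun i _ => ?_
  rw [← coeff_map, map_modByMonic _ hp, Polynomial.map_mul, Polynomial.map_pow, map_X]

end AdjoinRoot

theorem Algebra.trace_pi_apply {K ι : Type*} [CommRing K] [Fintype ι] [DecidableEq ι]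
    (v : ι → K) :
    Algebra.trace K (ι → K) v = ∑ i, v i := by
  rw [Algebra.trace_eq_matrix_trace (Pi.basisFun K ι)]
  simp [Matrix.trace, Algebra.leftMulMatrix_apply]

namespace Polynomial

variable {K : Type*} [Field K] [DecidableEq K] {P : K[X]}

theorem span_singleton_eq_iInf_span_X_sub_C (hP : P.Separable) (hs : P.Splits) :
    Ideal.span {P} = ⨅ z : P.roots.toFinset, Ideal.span {X - C (z : K)} := by
  rw [Ideal.iInf_span_singleton fun _ _ hzw =>
      pairwise_coprime_X_sub_C Subtype.val_injective hzw,
    prod_coe_sort P.roots.toFinset (X - C ·), Ideal.span_singleton_eq_span_singleton]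
  conv_lhs => rw [hs.eq_prod_roots]
  rw [prod_eq_multiset_prod, Multiset.toFinset_val, (nodup_roots hP).dedup]
  refine (associated_isUnit_mul_left_iff ?_).mpr (Associated.refl _)
  exact isUnit_C.mpr (leadingCoeff_ne_zero.mpr hP.ne_zero).isUnit

noncomputable def adjoinRootEquivPiRoots (hP : P.Separable) (hs : P.Splits) :
    AdjoinRoot P ≃ₐ[K] (P.roots.toFinset → K) :=
  (Ideal.quotientEquivAlgOfEq K (span_singleton_eq_iInf_span_X_sub_C hP hs)).trans <|
    (AlgEquiv.ofRingEquiv (f := Ideal.quotientInfRingEquivPiQuotient _ fun _ _ hzw =>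
        (Ideal.isCoprime_span_singleton_iff _ _).mpr
          (pairwise_coprime_X_sub_C Subtype.val_injective hzw)) fun _ => rfl).trans <|
    AlgEquiv.piCongrRight fun z => quotientSpanXSubCAlgEquiv (z : K)

theorem adjoinRootEquivPiRoots_mk (hP : P.Separable) (hs : P.Splits) (g : K[X]) :
    adjoinRootEquivPiRoots hP hs (AdjoinRoot.mk P g) =
      fun z : P.roots.toFinset => g.eval (z : K) :=
  rfl

theorem Separable.trace_adjoinRoot_mk_eq_sum_roots (hP : P.Separable) (hs : P.Splits)
    (g : K[X]) :
    Algebra.trace K (AdjoinRoot P) (AdjoinRoot.mk P g) = ∑ z ∈ P.roots.toFinset, g.eval z := by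
  rw [← Algebra.trace_eq_of_algEquiv (adjoinRootEquivPiRoots hP hs),
    adjoinRootEquivPiRoots_mk, Algebra.trace_pi_apply]
  exact sum_coe_sort P.roots.toFinset (g.eval ·)

theorem Separable.dvd_iff_forall_isRoot (hP : P.Separable) (hs : P.Splits)
    (g : K[X]) : P ∣ g ↔ ∀ z ∈ P.roots, g.IsRoot z := by
  refine ⟨fun hdvd z hz => ?_, fun h => ?_⟩
  · exact eval_eq_zero_of_dvd_of_eval_eq_zero hdvd (mem_roots'.mp hz).2
  · by_cases hg : g = 0
    · simp [hg]
    refine hs.dvd_of_roots_le_roots hP.ne_zero ?_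
    rw [Multiset.le_iff_subset (nodup_roots hP)]
    exact fun z hz => (mem_roots hg).mpr (h z hz)

end Polynomial

section FieldExtension

variable {K L : Type*} [Field K] [Field L] [Algebra K L] {p : K[X]}

theorem Polynomial.Separable.algebraMap_trace_adjoinRoot_mk_eq_sum_aroots [DecidableEq L]
    (hp : p.Separable) (hs : (p.map (algebraMap K L)).Splits) (g : K[X]) :
    algebraMap K L (Algebra.trace K (AdjoinRoot p) (AdjoinRoot.mk p g)) =
      ∑ z ∈ (p.aroots L).toFinset, aeval z g := by
  -- `AdjoinRoot.map_trace_mk` needs a monic polynomial; `p` and `p'` generate the same ideal.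
  have hc : IsUnit (C p.leadingCoeff⁻¹) :=
    isUnit_C.mpr (inv_ne_zero (leadingCoeff_ne_zero.mpr hp.ne_zero)).isUnit
  set p' := p * C p.leadingCoeff⁻¹
  have hassoc : Associated p p' := associated_mul_unit_right _ _ hc
  have hp' : (p'.map (algebraMap K L)).Separable := (hp.of_dvd hassoc.symm.dvd).map
  have hs' : (p'.map (algebraMap K L)).Splits := by
    rw [Polynomial.map_mul, map_C, mul_comm]; exact hs.C_mul _
  have hroots : p'.aroots L = p.aroots L := by
    rw [show p' = C p.leadingCoeff⁻¹ * p from mul_comm _ _,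
      aroots_C_mul _ (inv_ne_zero (leadingCoeff_ne_zero.mpr hp.ne_zero))]
  have htrace : Algebra.trace K (AdjoinRoot p) (AdjoinRoot.mk p g) =
      Algebra.trace K (AdjoinRoot p') (AdjoinRoot.mk p' g) :=
    (Algebra.trace_eq_of_algEquiv (Ideal.quotientEquivAlgOfEq K
      (Ideal.span_singleton_eq_span_singleton.mpr hassoc)) (AdjoinRoot.mk p g)).symm
  rw [htrace, AdjoinRoot.map_trace_mk _ (monic_mul_leadingCoeff_inv hp.ne_zero),
    hp'.trace_adjoinRoot_mk_eq_sum_roots hs', ← aroots_def, hroots]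
  simp only [eval_map_algebraMap]

theorem Polynomial.Separable.algebraMap_trace_adjoinRoot_mk_eq_sum_of_subset [DecidableEq L]
    (hp : p.Separable) (hs : (p.map (algebraMap K L)).Splits) {s : Finset L}
    (hsub : s ⊆ (p.aroots L).toFinset) {g : K[X]}
    (hg : ∀ z ∈ p.aroots L, z ∉ s → aeval z g = 0) :
    algebraMap K L (Algebra.trace K (AdjoinRoot p) (AdjoinRoot.mk p g)) =
      ∑ z ∈ s, aeval z g := by
  rw [hp.algebraMap_trace_adjoinRoot_mk_eq_sum_aroots hs,
    sum_subset hsub fun z hz hzs => hg z (Multiset.mem_toFinset.mp hz) hzs]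

theorem Polynomial.Separable.aeval_ne_zero_of_eq_mul {D G : K[X]} (hp : p.Separable)
    (h : p = D * G) {z : L} (hz : aeval z D = 0) : aeval z G ≠ 0 := by
  intro hGz
  have hdvd : (X - C z) * (X - C z) ∣ p.map (algebraMap K L) := by
    rw [h, Polynomial.map_mul]
    exact mul_dvd_mul (dvd_iff_isRoot.mpr (by rwa [IsRoot, eval_map_algebraMap]))
      (dvd_iff_isRoot.mpr (by rwa [IsRoot, eval_map_algebraMap]))
  exact not_isUnit_X_sub_C z (hp.map.squarefree _ hdvd)

end FieldExtension

section OrderedField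

variable {K : Type*} [Field K] [LinearOrder K] [IsStrictOrderedRing K] {p : K[X]} (q : K[X])

theorem Polynomial.Separable.trace_adjoinRoot_mk_mul_mul_self_pos [DecidableEq K]
    (hp : p.Separable) (hs : p.Splits) (hq : ∀ t ∈ p.roots, 0 < q.eval t) {F : K[X]}
    (hF : ¬ p ∣ F) : 0 < Algebra.trace K (AdjoinRoot p) (AdjoinRoot.mk p (F * q * F)) := by
  obtain ⟨t, ht, hFt⟩ : ∃ t ∈ p.roots, ¬ F.IsRoot t := by
    simpa only [not_forall, Classical.not_imp, exists_prop] using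
      (hp.dvd_iff_forall_isRoot hs F).not.mp hF
  rw [hp.trace_adjoinRoot_mk_eq_sum_roots hs]
  refine sum_pos' (fun t ht => ?_) ⟨t, Multiset.mem_toFinset.mpr ht, ?_⟩
  · have hqt := hq t (Multiset.mem_toFinset.mp ht)
    simp only [eval_mul]
    nlinarith [mul_self_nonneg (F.eval t)]
  · have hqt := hq t ht
    simp only [eval_mul]
    nlinarith [mul_self_pos.mpr hFt]

theorem Polynomial.Separable.exists_not_dvd_trace_nonpos_of_isRoot (hp : p.Separable) {t : K}
    (ht : p.IsRoot t) (hq : q.eval t ≤ 0) :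
    ∃ F : K[X], ¬ p ∣ F ∧
      Algebra.trace K (AdjoinRoot p) (AdjoinRoot.mk p (F * q * F)) ≤ 0 := by
  classical
  obtain ⟨G, hG⟩ := dvd_iff_isRoot.mpr ht
  have hGt : G.eval t ≠ 0 := by
    simpa using hp.aeval_ne_zero_of_eq_mul (L := K) hG (z := t) (by simp)
  refine ⟨G, fun hdvd => hGt (eval_eq_zero_of_dvd_of_eval_eq_zero hdvd ht), ?_⟩
  set L := AlgebraicClosure K
  have hroot : algebraMap K L t ∈ (p.aroots L).toFinset := by
    rw [Multiset.mem_toFinset, mem_aroots, aeval_algebraMap_apply_eq_algebraMap_eval, ht.eq_zero,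
      map_zero]
    exact ⟨hp.ne_zero, rfl⟩
  have hvanish : ∀ z ∈ p.aroots L, z ∉ ({algebraMap K L t} : Finset L) →
      aeval z (G * q * G) = 0 := by
    intro z hz hzt
    have hpz := (mem_aroots.mp hz).2
    rw [hG, map_mul, map_sub, aeval_X, aeval_C] at hpz
    rw [map_mul, (mul_eq_zero.mp hpz).resolve_left (sub_ne_zero.mpr (by simpa using hzt)),
      mul_zero]
  have htrace := hp.algebraMap_trace_adjoinRoot_mk_eq_sum_of_subset (IsAlgClosed.splits _)
    (singleton_subset_iff.mpr hroot) hvanish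
  rw [sum_singleton, aeval_algebraMap_apply_eq_algebraMap_eval] at htrace
  rw [(algebraMap K L).injective htrace, eval_mul, eval_mul]
  nlinarith [mul_self_nonneg (G.eval t)]

end OrderedField

section Real

open ComplexConjugate

variable {p : ℝ[X]} (q : ℝ[X])

theorem Complex.aeval_X_sq_sub_two_re_mul_X_add_norm_sq (z₀ z : ℂ) :
    aeval z (X ^ 2 - C (2 * z₀.re) * X + C (‖z₀‖ ^ 2) : ℝ[X]) =
      (z - conj z₀) * (z - z₀) := by
  simp only [map_add, map_sub, map_mul, map_pow, aeval_X, aeval_C, Complex.coe_algebraMap]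
  have h := Complex.add_conj z₀
  push_cast at h ⊢
  linear_combination z * h - Complex.mul_conj' z₀

theorem Polynomial.Separable.trace_adjoinRoot_mk_mul_eq_two_mul_re (hp : p.Separable) {z₀ : ℂ}
    (hz₀ : aeval z₀ p = 0) (him : z₀.im ≠ 0) {G : ℝ[X]}
    (hG : p = (X ^ 2 - C (2 * z₀.re) * X + C (‖z₀‖ ^ 2)) * G) (H : ℝ[X]) :
    Algebra.trace ℝ (AdjoinRoot p) (AdjoinRoot.mk p (G * H)) = 2 * (aeval z₀ (G * H)).re := by
  have hconj : conj z₀ ≠ z₀ := mt Complex.conj_eq_iff_im.mp him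
  have hsub : {conj z₀, z₀} ⊆ (p.aroots ℂ).toFinset := by
    intro z hz
    rw [Multiset.mem_toFinset, mem_aroots]
    rcases mem_insert.mp hz with rfl | hz
    · exact ⟨hp.ne_zero, by rw [aeval_conj, hz₀, map_zero]⟩
    · exact ⟨hp.ne_zero, by rw [mem_singleton.mp hz, hz₀]⟩
  have hvanish :
      ∀ z ∈ p.aroots ℂ, z ∉ ({conj z₀, z₀} : Finset ℂ) → aeval z (G * H) = 0 := by
    intro z hz hzs
    have hpz := (mem_aroots.mp hz).2
    rw [hG, map_mul, Complex.aeval_X_sq_sub_two_re_mul_X_add_norm_sq] at hpz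
    simp only [mem_insert, mem_singleton, not_or] at hzs
    rw [map_mul, (mul_eq_zero.mp hpz).resolve_left
      (mul_ne_zero (sub_ne_zero.mpr hzs.1) (sub_ne_zero.mpr hzs.2)), zero_mul]
  apply (algebraMap ℝ ℂ).injective
  rw [hp.algebraMap_trace_adjoinRoot_mk_eq_sum_of_subset (IsAlgClosed.splits _) hsub hvanish,
    sum_pair hconj, aeval_conj, add_comm, Complex.add_conj]
  rfl

theorem Polynomial.Separable.exists_not_dvd_trace_nonpos_of_aeval_eq_zero (hp : p.Separable)
    {z₀ : ℂ} (hz₀ : aeval z₀ p = 0) (him : z₀.im ≠ 0) :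
    ∃ F : ℝ[X], ¬ p ∣ F ∧
      Algebra.trace ℝ (AdjoinRoot p) (AdjoinRoot.mk p (F * q * F)) ≤ 0 := by
  obtain ⟨G, hG⟩ := quadratic_dvd_of_aeval_eq_zero_im_ne_zero p hz₀ him
  have hGz₀ : aeval z₀ G ≠ 0 := hp.aeval_ne_zero_of_eq_mul hG
    (by rw [Complex.aeval_X_sq_sub_two_re_mul_X_add_norm_sq, sub_self, mul_zero])
  have htrace := hp.trace_adjoinRoot_mk_mul_eq_two_mul_re hz₀ him hG
  set w := aeval z₀ (G * q * G)
  by_cases hw : w.re ≤ 0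
  · refine ⟨G, fun h => hGz₀ (aeval_eq_zero_of_dvd_aeval_eq_zero h hz₀), ?_⟩
    rw [mul_assoc, htrace, ← mul_assoc]
    linarith
  -- Otherwise multiply by `X - re z₀`, whose square at `z₀` is `-(im z₀)²`; this flips the
  -- sign of the real part.
  have hL : aeval z₀ (X - C z₀.re) = z₀.im * Complex.I := by
    simp only [map_sub, aeval_X, aeval_C, Complex.coe_algebraMap]
    apply Complex.ext <;> simp
  refine ⟨G * (X - C z₀.re), fun h => ?_, ?_⟩
  · have hFz₀ := aeval_eq_zero_of_dvd_aeval_eq_zero h hz₀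
    rw [map_mul, hL] at hFz₀
    exact mul_ne_zero hGz₀ (mul_ne_zero (Complex.ofReal_ne_zero.mpr him) Complex.I_ne_zero) hFz₀
  · rw [show G * (X - C z₀.re) * q * (G * (X - C z₀.re)) = G * (q * G * (X - C z₀.re) ^ 2) by
      ring, htrace, ← mul_assoc, ← mul_assoc, map_mul, map_pow, hL, mul_pow, Complex.I_sq,
      mul_neg_one, ← Complex.ofReal_pow, mul_neg, Complex.neg_re, Complex.re_mul_ofReal]
    nlinarith [sq_nonneg z₀.im, not_le.mp hw]

theorem Polynomial.splits_of_forall_aeval_eq_zero_im_eq_zero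
    (h : ∀ z : ℂ, aeval z p = 0 → z.im = 0) : p.Splits :=
  (IsAlgClosed.splits (p.map (algebraMap ℝ ℂ))).of_splits_map_of_injective
    (algebraMap ℝ ℂ).injective fun z hz =>
      ⟨z.re, Complex.ext rfl (by
        simp [h z (by simpa using (mem_roots'.mp hz).2)])⟩

theorem Polynomial.Separable.forall_trace_adjoinRoot_mk_mul_mul_self_pos_iff (hp : p.Separable) :
    (∀ F : ℝ[X], ¬ p ∣ F →
        0 < Algebra.trace ℝ (AdjoinRoot p) (AdjoinRoot.mk p (F * q * F))) ↔
      (∀ z : ℂ, aeval z p = 0 → z.im = 0) ∧ ∀ t : ℝ, p.IsRoot t → 0 < q.eval t := by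
  refine ⟨fun h => ⟨fun z hz => ?_, fun t ht => ?_⟩, fun ⟨hreal, hq⟩ F hF => ?_⟩
  · by_contra him
    obtain ⟨F, hF, hle⟩ := hp.exists_not_dvd_trace_nonpos_of_aeval_eq_zero q hz him
    exact (h F hF).not_ge hle
  · by_contra! hqt
    obtain ⟨F, hF, hle⟩ := hp.exists_not_dvd_trace_nonpos_of_isRoot q ht hqt
    exact (h F hF).not_ge hle
  · exact hp.trace_adjoinRoot_mk_mul_mul_self_pos q
      (splits_of_forall_aeval_eq_zero_im_eq_zero hreal)
      (fun t ht => hq t (isRoot_of_mem_roots ht)) hF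

end Real

theorem card_filter_pos_sub_card_filter_neg_eq_card_iff {ι α : Type*} [Fintype ι]
    [LinearOrder α] [Zero α] (f : ι → α) :
    ((#{i | 0 < f i} : ℤ) - #{i | f i < 0} = Fintype.card ι) ↔ ∀ i, 0 < f i := by
  refine ⟨fun h => ?_, fun h => ?_⟩
  · have hpos : #{i | 0 < f i} = Fintype.card ι := by
      have hle := card_filter_le univ fun i => 0 < f i
      rw [card_univ] at hle
      omega
    simpa [filter_eq_self] using (card_eq_iff_eq_univ _).mp hpos
  · simp [filter_true_of_mem fun i _ => h i, filter_false_of_mem fun i _ => (h i).not_gt]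

section HermiteForm

variable {K : Type*} [Field K] (p q : K[X])

noncomputable def hermiteForm : LinearMap.BilinForm K (AdjoinRoot p) :=
  Algebra.traceForm K (AdjoinRoot p) ∘ₗ LinearMap.mulRight K (AdjoinRoot.mk p q)

theorem hermiteForm_apply (f g : AdjoinRoot p) :
    hermiteForm p q f g = Algebra.trace K (AdjoinRoot p) (f * AdjoinRoot.mk p q * g) :=
  rfl

theorem hermiteForm_isSymm : (hermiteForm p q).IsSymm :=
  ⟨fun f g => by simp only [hermiteForm_apply]; ring_nf⟩

theorem hermiteForm_posDef_iff [PartialOrder K] :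
    (hermiteForm p q).toQuadraticMap.PosDef ↔
      ∀ F : K[X], ¬ p ∣ F →
        0 < Algebra.trace K (AdjoinRoot p) (AdjoinRoot.mk p (F * q * F)) := by
  refine ⟨fun h F hF => ?_, fun h x hx => ?_⟩
  · simpa [hermiteForm_apply] using h (AdjoinRoot.mk p F) (mt AdjoinRoot.mk_eq_zero.mp hF)
  · obtain ⟨F, rfl⟩ := AdjoinRoot.mk_surjective x
    simpa [hermiteForm_apply] using h F (mt AdjoinRoot.mk_eq_zero.mpr hx)

end HermiteForm

theorem hermiteGram_eq_toMatrix (p q : ℝ[X])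
    (b : Module.Basis (Fin p.natDegree) ℝ (Polynomial ℝ ⧸ Ideal.span {p})) :
    hermiteGram p q b = (hermiteForm p q).toMatrix b := by
  ext i j
  exact (LinearMap.BilinForm.toMatrix_apply b (hermiteForm p q) i j).symm

theorem stmt10_general (p q : Polynomial ℝ) (hp : Squarefree p)
    (b : Module.Basis (Fin p.natDegree) ℝ (Polynomial ℝ ⧸ Ideal.span {p}))
    (hG : (hermiteGram p q b).IsHermitian) :
    (((Finset.univ.filter fun i => 0 < hG.eigenvalues i).card : ℤ) -
        ((Finset.univ.filter fun i => hG.eigenvalues i < 0).card : ℤ) = p.natDegree)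
    ↔ ((∀ z : ℂ, (p.map (algebraMap ℝ ℂ)).eval z = 0 → z.im = 0) ∧
        ∀ t : ℝ, p.eval t = 0 → 0 < q.eval t) := by
  have hsep : p.Separable := PerfectField.separable_iff_squarefree.mpr hp
  have hcount := card_filter_pos_sub_card_filter_neg_eq_card_iff hG.eigenvalues
  rw [Fintype.card_fin] at hcount
  rw [hcount, ← hG.posDef_iff_eigenvalues_pos, hermiteGram_eq_toMatrix,
    ← LinearMap.BilinForm.posDef_toQuadraticMap_iff_matrix b _ (hermiteForm_isSymm p q)]
  refine (hermiteForm_posDef_iff p q).trans ?_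
  rw [hsep.forall_trace_adjoinRoot_mk_mul_mul_self_pos_iff]
  simp only [eval_map_algebraMap, IsRoot.def]

/-- The Hermite form `S_q` has signature `δ = deg p` iff every complex root of `p` is
real and `q` is strictly positive at every real root of `p`. -/
theorem stmt10 (p q : Polynomial ℝ) (hp : Squarefree p) (hdeg : 0 < p.natDegree)
    (b : Module.Basis (Fin p.natDegree) ℝ (Polynomial ℝ ⧸ Ideal.span {p}))
    (hG : (hermiteGram p q b).IsHermitian) :
    (((Finset.univ.filter fun i => 0 < hG.eigenvalues i).card : ℤ) -
        ((Finset.univ.filter fun i => hG.eigenvalues i < 0).card : ℤ) = p.natDegree)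
    ↔ ((∀ z : ℂ, (p.map (algebraMap ℝ ℂ)).eval z = 0 → z.im = 0) ∧
        ∀ t : ℝ, p.eval t = 0 → 0 < q.eval t) :=
  stmt10_general p q hp b hG
end
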